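/- Let δ ∈ (0,1), K ≥ 1, and let (I_w)_{w∈Ω_*} be a nested family of compact intervals indexed by a tree such that: (a) for each w the children {I_{we}} are disjoint subintervals of I_w with ∑_e (|I_{we}|/|I_w|)^δ ≤ 1; (b) for each w and child e, |I_{we}| ≤ |I_w|/10; and (c) for each w, the minimal child length satisfies min_e |I_{we}| ≥ |I_w|/K. Then the limit set X = ⋂_n ⋃_{w∈Ω_n} I_w satisfies dim_B^+ X ≤ δ. -/
import Mathlib


open Set Filter MeasureTheory ENNReal

/-- Minimal number of closed intervals of length `r` needed to cover `S ⊆ ℝ`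
(`∞` if no finite cover exists). -/
noncomputable def coveringNumber (r : ℝ) (S : Set ℝ) : ℝ≥0∞ :=
  ⨅ (t : Finset ℝ) (_ : S ⊆ ⋃ x ∈ t, Set.Icc x (x + r)), (t.card : ℝ≥0∞)

/-- Upper box dimension of `S ⊆ ℝ`:
`limsup_{r → 0⁺} log N_r(S) / log (1/r)`. -/
noncomputable def upperBoxDim (S : Set ℝ) : ℝ :=
  limsup (fun r : ℝ => Real.log (coveringNumber r S).toReal / Real.log (1 / r))
    (nhdsWithin 0 (Set.Ioi 0))

/-- The sumset `A 0 + ⋯ + A (d-1)`. -/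
def sumSet (d : ℕ) (A : Fin d → Set ℝ) : Set ℝ :=
  {x | ∃ f : Fin d → ℝ, (∀ i, f i ∈ A i) ∧ x = ∑ i, f i}

/-- The level-`n` words of the tree determined by the children function `child`. -/
def wordsF (child : List ℕ → Finset ℕ) : ℕ → Finset (List ℕ)
  | 0 => {([] : List ℕ)}
  | n + 1 => (wordsF child n).biUnion (fun u => (child u).image (fun e => u ++ [e]))

/-- `w` is a word of the tree determined by `child`. -/
def IsWord (child : List ℕ → Finset ℕ) (w : List ℕ) : Prop :=
  ∃ n, w ∈ wordsF child n


lemma mem_wordsF_succ {child : List ℕ → Finset ℕ} {n : ℕ} {w : List ℕ} :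
    w ∈ wordsF child (n+1) ↔ ∃ u ∈ wordsF child n, ∃ e ∈ child u, w = u ++ [e] := by
  simp [wordsF, eq_comm]

lemma wordsF_length {child : List ℕ → Finset ℕ} : ∀ {n : ℕ} {w : List ℕ},
    w ∈ wordsF child n → w.length = n := by
  intro n
  induction n with
  | zero => intro w hw; simp [wordsF] at hw; simp [hw]
  | succ n ih =>
    intro w hw
    obtain ⟨u, hu, e, he, rfl⟩ := mem_wordsF_succ.1 hw
    simp [ih hu]

lemma append_singleton_inj {u u' : List ℕ} {e e' : ℕ} (hl : u.length = u'.length)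
    (h : u ++ [e] = u' ++ [e']) : u = u' ∧ e = e' := by
  obtain ⟨h1, h2⟩ := List.append_inj h (by omega)
  exact ⟨h1, by simpa using h2⟩

variable {child : List ℕ → Finset ℕ} {a b : List ℕ → ℝ}

lemma decay (hratio : ∀ w, IsWord child w → ∀ e ∈ child w,
      b (w ++ [e]) - a (w ++ [e]) ≤ (b w - a w) / 10) :
    ∀ {n : ℕ} {w : List ℕ}, w ∈ wordsF child n →
      b w - a w ≤ (b [] - a []) / 10 ^ n := by
  intro n
  induction n with
  | zero => intro w hw; simp [wordsF] at hw; simp [hw]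
  | succ n ih =>
    intro w hw
    obtain ⟨u, hu, e, he, rfl⟩ := mem_wordsF_succ.1 hw
    calc b (u ++ [e]) - a (u ++ [e]) ≤ (b u - a u) / 10 := hratio u ⟨n, hu⟩ e he
    _ ≤ ((b [] - a []) / 10 ^ n) / 10 := by
        have := ih hu; linarith
    _ = (b [] - a []) / 10 ^ (n+1) := by ring

lemma level_disjoint
    (hsub : ∀ w, IsWord child w → ∀ e ∈ child w,
      Set.Icc (a (w ++ [e])) (b (w ++ [e])) ⊆ Set.Icc (a w) (b w))
    (hdisj : ∀ w, IsWord child w → ∀ e ∈ child w, ∀ e' ∈ child w, e ≠ e' →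
      Disjoint (Set.Icc (a (w ++ [e])) (b (w ++ [e])))
        (Set.Icc (a (w ++ [e'])) (b (w ++ [e'])))) :
    ∀ {n : ℕ} {w w' : List ℕ}, w ∈ wordsF child n → w' ∈ wordsF child n → w ≠ w' →
      Disjoint (Set.Icc (a w) (b w)) (Set.Icc (a w') (b w')) := by
  intro n
  induction n with
  | zero =>
    intro w w' hw hw' hne
    simp [wordsF] at hw hw'; exact absurd (hw.trans hw'.symm) hne
  | succ n ih =>
    intro w w' hw hw' hne
    obtain ⟨u, hu, e, he, rfl⟩ := mem_wordsF_succ.1 hw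
    obtain ⟨u', hu', e', he', rfl⟩ := mem_wordsF_succ.1 hw'
    by_cases huu : u = u'
    · subst huu
      have hee : e ≠ e' := fun h => hne (by rw [h])
      exact hdisj u ⟨n, hu⟩ e he e' he' hee
    · exact Set.disjoint_of_subset (hsub u ⟨n, hu⟩ e he) (hsub u' ⟨n, hu'⟩ e' he')
        (ih hu hu' huu)

lemma children_sum {δ : ℝ}
    (hlen : ∀ w, IsWord child w → a w < b w)
    (hsum : ∀ w, IsWord child w →
      ∑ e ∈ child w, ((b (w ++ [e]) - a (w ++ [e])) / (b w - a w)) ^ δ ≤ 1)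
    {n : ℕ} {u : List ℕ} (hu : u ∈ wordsF child n) :
    ∑ e ∈ child u, (b (u ++ [e]) - a (u ++ [e])) ^ δ ≤ (b u - a u) ^ δ := by
  have hu' : IsWord child u := ⟨n, hu⟩
  have hLu : 0 < b u - a u := by have := hlen u hu'; linarith
  have h := hsum u hu'
  have key : ∀ e ∈ child u,
      ((b (u ++ [e]) - a (u ++ [e])) / (b u - a u)) ^ δ
        = (b (u ++ [e]) - a (u ++ [e])) ^ δ / (b u - a u) ^ δ := by
    intro e he
    have hw : IsWord child (u ++ [e]) := ⟨n+1, mem_wordsF_succ.2 ⟨u, hu, e, he, rfl⟩⟩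
    have : 0 < b (u ++ [e]) - a (u ++ [e]) := by have := hlen _ hw; linarith
    exact Real.div_rpow this.le hLu.le δ
  rw [Finset.sum_congr rfl key, ← Finset.sum_div, div_le_one (Real.rpow_pos_of_pos hLu δ)] at h
  exact h

noncomputable def liveF (child : List ℕ → Finset ℕ) (a b : List ℕ → ℝ) (r : ℝ) (n : ℕ) : Finset (List ℕ) :=
  (wordsF child n).filter (fun w => r ≤ b w - a w)

noncomputable def newDeadF (child : List ℕ → Finset ℕ) (a b : List ℕ → ℝ) (r : ℝ) (n : ℕ) : Finset (List ℕ) :=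
  (liveF child a b r n).biUnion
    (fun u => ((child u).image (fun e => u ++ [e])).filter (fun w => ¬ r ≤ b w - a w))

noncomputable def deadF (child : List ℕ → Finset ℕ) (a b : List ℕ → ℝ) (r : ℝ) : ℕ → Finset (List ℕ)
  | 0 => ∅
  | n + 1 => deadF child a b r n ∪ newDeadF child a b r n

variable {r : ℝ}

lemma mem_liveF {n : ℕ} {w : List ℕ} :
    w ∈ liveF child a b r n ↔ w ∈ wordsF child n ∧ r ≤ b w - a w := Finset.mem_filter

lemma newDeadF_spec {n : ℕ} {w : List ℕ} (hw : w ∈ newDeadF child a b r n) :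
    w.length = n + 1 ∧ w ∈ wordsF child (n+1) ∧ b w - a w < r ∧
      ∃ u e, u ++ [e] = w ∧ e ∈ child u ∧ u ∈ wordsF child n ∧ r ≤ b u - a u := by
  obtain ⟨u, hu, hw⟩ := Finset.mem_biUnion.1 hw
  rw [Finset.mem_filter, Finset.mem_image] at hw
  obtain ⟨⟨e, he, rfl⟩, hlt⟩ := hw
  rw [mem_liveF] at hu
  have hword : u ++ [e] ∈ wordsF child (n+1) := mem_wordsF_succ.2 ⟨u, hu.1, e, he, rfl⟩
  exact ⟨wordsF_length hword, hword, not_le.1 hlt, u, e, rfl, he, hu.1, hu.2⟩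

lemma deadF_spec : ∀ {n : ℕ} {w : List ℕ}, w ∈ deadF child a b r n →
    w.length ≤ n ∧ IsWord child w ∧ b w - a w < r ∧
      ∃ u e, u ++ [e] = w ∧ e ∈ child u ∧ IsWord child u ∧ r ≤ b u - a u := by
  intro n
  induction n with
  | zero => intro w hw; simp [deadF] at hw
  | succ n ih =>
    intro w hw
    rw [deadF, Finset.mem_union] at hw
    rcases hw with hw | hw
    · obtain ⟨h1, h2⟩ := ih hw
      exact ⟨h1.trans (Nat.le_succ n), h2⟩
    · obtain ⟨h1, h2, h3, u, e, h4, h5, h6, h7⟩ := newDeadF_spec hw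
      exact ⟨h1.le, ⟨n+1, h2⟩, h3, u, e, h4, h5, ⟨n, h6⟩, h7⟩

lemma pairwise_images {n : ℕ} (p : List ℕ → Prop) [DecidablePred p] :
    Set.PairwiseDisjoint ↑(liveF child a b r n)
      (fun u => ((child u).image (fun e => u ++ [e])).filter p) := by
  intro u hu u' hu' hne
  simp only [Finset.mem_coe] at hu hu'
  refine Finset.disjoint_left.2 ?_
  intro w hw hw'
  rw [Finset.mem_filter, Finset.mem_image] at hw hw'
  obtain ⟨⟨e, he, rfl⟩, -⟩ := hw
  obtain ⟨⟨e', he', heq⟩, -⟩ := hw'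
  have hlu : u.length = u'.length := by
    rw [wordsF_length (mem_liveF.1 hu).1, wordsF_length (mem_liveF.1 hu').1]
  exact hne (append_singleton_inj hlu heq.symm).1

lemma liveF_succ_eq
    (hlen : ∀ w, IsWord child w → a w < b w)
    (hratio : ∀ w, IsWord child w → ∀ e ∈ child w,
      b (w ++ [e]) - a (w ++ [e]) ≤ (b w - a w) / 10)
    (n : ℕ) :
    liveF child a b r (n+1) =
      (liveF child a b r n).biUnion
        (fun u => ((child u).image (fun e => u ++ [e])).filter (fun w => r ≤ b w - a w)) := by
  ext w
  rw [mem_liveF, Finset.mem_biUnion]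
  constructor
  · rintro ⟨hw, hr⟩
    obtain ⟨u, hu, e, he, rfl⟩ := mem_wordsF_succ.1 hw
    have h1 : b (u ++ [e]) - a (u ++ [e]) ≤ (b u - a u) / 10 := hratio u ⟨n, hu⟩ e he
    have h2 : 0 < b u - a u := by have := hlen u ⟨n, hu⟩; linarith
    refine ⟨u, mem_liveF.2 ⟨hu, by linarith⟩, ?_⟩
    rw [Finset.mem_filter, Finset.mem_image]
    exact ⟨⟨e, he, rfl⟩, hr⟩
  · rintro ⟨u, hu, hw⟩
    rw [Finset.mem_filter, Finset.mem_image] at hw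
    obtain ⟨⟨e, he, rfl⟩, hr⟩ := hw
    exact ⟨mem_wordsF_succ.2 ⟨u, (mem_liveF.1 hu).1, e, he, rfl⟩, hr⟩

lemma invariant {δ : ℝ}
    (hlen : ∀ w, IsWord child w → a w < b w)
    (hsum : ∀ w, IsWord child w →
      ∑ e ∈ child w, ((b (w ++ [e]) - a (w ++ [e])) / (b w - a w)) ^ δ ≤ 1)
    (hratio : ∀ w, IsWord child w → ∀ e ∈ child w,
      b (w ++ [e]) - a (w ++ [e]) ≤ (b w - a w) / 10) :
    ∀ n : ℕ, ∑ w ∈ liveF child a b r n, (b w - a w) ^ δ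
      + ∑ w ∈ deadF child a b r n, (b w - a w) ^ δ ≤ (b [] - a []) ^ δ := by
  intro n
  induction n with
  | zero =>
    have h0 : (0:ℝ) ≤ b [] - a [] := by
      have := hlen [] ⟨0, by simp [wordsF]⟩; linarith
    simp only [deadF, Finset.sum_empty, add_zero, liveF]
    show ∑ w ∈ Finset.filter _ {([] : List ℕ)}, _ ≤ _
    rw [Finset.filter_singleton]
    split
    · simp
    · simpa using Real.rpow_nonneg h0 δ
  | succ n ih =>
    have hdisjd : Disjoint (deadF child a b r n) (newDeadF child a b r n) := by
      refine Finset.disjoint_left.2 fun w hw hw' => ?_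
      have h1 := (deadF_spec hw).1
      have h2 := (newDeadF_spec hw').1
      omega
    rw [deadF, Finset.sum_union hdisjd, liveF_succ_eq hlen hratio,
      Finset.sum_biUnion (pairwise_images _), newDeadF,
      Finset.sum_biUnion (pairwise_images _)]
    have key : ∑ u ∈ liveF child a b r n,
        (∑ w ∈ ((child u).image (fun e => u ++ [e])).filter (fun w => r ≤ b w - a w),
          (b w - a w) ^ δ
        + ∑ w ∈ ((child u).image (fun e => u ++ [e])).filter (fun w => ¬ r ≤ b w - a w),
          (b w - a w) ^ δ)
        ≤ ∑ u ∈ liveF child a b r n, (b u - a u) ^ δ := by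
      refine Finset.sum_le_sum fun u hu => ?_
      rw [Finset.sum_filter_add_sum_filter_not]
      rw [Finset.sum_image (fun e he e' he' h => by simpa using (append_singleton_inj rfl h).2)]
      exact children_sum hlen hsum (mem_liveF.1 hu).1
    rw [Finset.sum_add_distrib] at key
    linarith

lemma cover_lemma
    (hlen : ∀ w, IsWord child w → a w < b w)
    (hsub : ∀ w, IsWord child w → ∀ e ∈ child w,
      Set.Icc (a (w ++ [e])) (b (w ++ [e])) ⊆ Set.Icc (a w) (b w))
    (hdisj : ∀ w, IsWord child w → ∀ e ∈ child w, ∀ e' ∈ child w, e ≠ e' →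
      Disjoint (Set.Icc (a (w ++ [e])) (b (w ++ [e])))
        (Set.Icc (a (w ++ [e'])) (b (w ++ [e']))))
    (hr : r ≤ b [] - a []) :
    ∀ n : ℕ, (⋂ m, ⋃ w ∈ wordsF child m, Set.Icc (a w) (b w)) ⊆
      (⋃ w ∈ liveF child a b r n, Set.Icc (a w) (b w))
      ∪ (⋃ w ∈ deadF child a b r n, Set.Icc (a w) (b w)) := by
  intro n
  induction n with
  | zero =>
    intro x hx
    left
    have hx0 : x ∈ ⋃ w ∈ wordsF child 0, Set.Icc (a w) (b w) := Set.mem_iInter.1 hx 0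
    simp only [wordsF, Finset.mem_singleton, Set.mem_iUnion] at hx0
    obtain ⟨w, rfl, hxw⟩ := hx0
    refine Set.mem_iUnion₂.2 ⟨[], ?_, hxw⟩
    exact mem_liveF.2 ⟨by simp [wordsF], hr⟩
  | succ n ih =>
    intro x hx
    rcases ih hx with hlive | hdead
    · obtain ⟨u, hu, hxu⟩ := Set.mem_iUnion₂.1 hlive
      have hx1 : x ∈ ⋃ w ∈ wordsF child (n+1), Set.Icc (a w) (b w) := Set.mem_iInter.1 hx (n+1)
      obtain ⟨w, hw, hxw⟩ := Set.mem_iUnion₂.1 hx1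
      obtain ⟨u', hu', e, he, rfl⟩ := mem_wordsF_succ.1 hw
      have huu : u' = u := by
        by_contra hne
        have hxu' : x ∈ Set.Icc (a u') (b u') := hsub u' ⟨n, hu'⟩ e he hxw
        exact (level_disjoint hsub hdisj hu' (mem_liveF.1 hu).1 hne).ne_of_mem hxu' hxu rfl
      subst huu
      by_cases hcase : r ≤ b (u' ++ [e]) - a (u' ++ [e])
      · left
        exact Set.mem_iUnion₂.2 ⟨u' ++ [e], mem_liveF.2 ⟨hw, hcase⟩, hxw⟩
      · right
        refine Set.mem_iUnion₂.2 ⟨u' ++ [e], ?_, hxw⟩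
        rw [deadF, Finset.mem_union]
        right
        refine Finset.mem_biUnion.2 ⟨u', hu, ?_⟩
        rw [Finset.mem_filter, Finset.mem_image]
        exact ⟨⟨e, he, rfl⟩, hcase⟩
    · obtain ⟨w, hw, hxw⟩ := Set.mem_iUnion₂.1 hdead
      right
      refine Set.mem_iUnion₂.2 ⟨w, ?_, hxw⟩
      rw [deadF, Finset.mem_union]
      exact Or.inl hw

lemma liveF_empty
    (hratio : ∀ w, IsWord child w → ∀ e ∈ child w,
      b (w ++ [e]) - a (w ++ [e]) ≤ (b w - a w) / 10)
    {n : ℕ} (hn : (b [] - a []) / 10 ^ n < r) :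
    liveF child a b r n = ∅ := by
  rw [Finset.eq_empty_iff_forall_notMem]
  intro w hw
  obtain ⟨hw1, hw2⟩ := mem_liveF.1 hw
  exact absurd ((decay hratio hw1).trans_lt hn) (not_lt.2 hw2)


lemma covering_bound {δ K : ℝ} (hδ : 0 < δ) (hK : 1 ≤ K)
    (hlen : ∀ w, IsWord child w → a w < b w)
    (hsub : ∀ w, IsWord child w → ∀ e ∈ child w,
      Set.Icc (a (w ++ [e])) (b (w ++ [e])) ⊆ Set.Icc (a w) (b w))
    (hdisj : ∀ w, IsWord child w → ∀ e ∈ child w, ∀ e' ∈ child w, e ≠ e' →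
      Disjoint (Set.Icc (a (w ++ [e])) (b (w ++ [e])))
        (Set.Icc (a (w ++ [e'])) (b (w ++ [e']))))
    (hsum : ∀ w, IsWord child w →
      ∑ e ∈ child w, ((b (w ++ [e]) - a (w ++ [e])) / (b w - a w)) ^ δ ≤ 1)
    (hratio : ∀ w, IsWord child w → ∀ e ∈ child w,
      b (w ++ [e]) - a (w ++ [e]) ≤ (b w - a w) / 10)
    (hmin : ∀ w, IsWord child w → ∀ e ∈ child w,
      (b w - a w) / K ≤ b (w ++ [e]) - a (w ++ [e]))
    (hr0 : 0 < r) (hrL : r ≤ b [] - a []) :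
    ∃ m : ℕ,
      coveringNumber r (⋂ n, ⋃ w ∈ wordsF child n, Set.Icc (a w) (b w)) ≤ (m : ℝ≥0∞)
      ∧ (m : ℝ) * (r / K) ^ δ ≤ (b [] - a []) ^ δ := by
  -- choose a terminal level
  obtain ⟨N, hN⟩ := pow_unbounded_of_one_lt ((b [] - a []) / r) (by norm_num : (1:ℝ) < 10)
  have hterm : (b [] - a []) / 10 ^ N < r := by
    rw [div_lt_iff₀ (by positivity)]
    rw [div_lt_iff₀ hr0] at hN
    linarith
  have hlive : liveF child a b r N = ∅ := liveF_empty hratio hterm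
  set D := deadF child a b r N with hD
  refine ⟨D.card, ?_, ?_⟩
  · -- covering number bound
    have hcov : (⋂ n, ⋃ w ∈ wordsF child n, Set.Icc (a w) (b w))
        ⊆ ⋃ x ∈ (D.image a : Finset ℝ), Set.Icc x (x + r) := by
      intro x hx
      rcases cover_lemma hlen hsub hdisj hrL N hx with h | h
      · rw [hlive] at h; simpa using h
      · obtain ⟨w, hw, hxw⟩ := Set.mem_iUnion₂.1 h
        refine Set.mem_iUnion₂.2 ⟨a w, Finset.mem_image_of_mem a hw, ?_⟩
        have hblt : b w - a w < r := (deadF_spec hw).2.2.1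
        exact ⟨hxw.1, hxw.2.trans (by linarith)⟩
    calc coveringNumber r _ ≤ ((D.image a).card : ℝ≥0∞) := by
          exact iInf₂_le (D.image a) hcov
      _ ≤ (D.card : ℝ≥0∞) := by
          exact_mod_cast Nat.cast_le.2 (Finset.card_image_le)
  · -- cardinality bound
    have hsum1 : ∑ w ∈ liveF child a b r N, (b w - a w) ^ δ
        + ∑ w ∈ D, (b w - a w) ^ δ ≤ (b [] - a []) ^ δ := invariant hlen hsum hratio N
    rw [hlive, Finset.sum_empty, zero_add] at hsum1
    have hK0 : (0:ℝ) < K := lt_of_lt_of_le one_pos hK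
    have hlow : ∀ w ∈ D, (r / K) ^ δ ≤ (b w - a w) ^ δ := by
      intro w hw
      obtain ⟨-, -, -, u, e, rfl, he, hu, hru⟩ := deadF_spec hw
      have h1 : (b u - a u) / K ≤ b (u ++ [e]) - a (u ++ [e]) := hmin u hu e he
      have h2 : r / K ≤ (b u - a u) / K := by
        gcongr
      exact Real.rpow_le_rpow (by positivity) (h2.trans h1) hδ.le
    have := Finset.card_nsmul_le_sum D (fun w => (b w - a w) ^ δ) ((r / K) ^ δ) hlow
    rw [nsmul_eq_mul] at this
    exact this.trans hsum1

lemma log_le_log_general {x y : ℝ} (hx : 0 ≤ x) (hxy : x ≤ y) (hy : 1 ≤ y) :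
    Real.log x ≤ Real.log y := by
  rcases lt_or_ge x 1 with h | h
  · exact (Real.log_nonpos hx h.le).trans (Real.log_nonneg hy)
  · exact Real.log_le_log (by linarith) hxy

theorem aux_main (δ K : ℝ) (hδ : δ ∈ Set.Ioo (0:ℝ) 1) (hK : 1 ≤ K)
    (child : List ℕ → Finset ℕ) (a b : List ℕ → ℝ)
    (hchild : ∀ w, IsWord child w → (child w).Nonempty)
    (hlen : ∀ w, IsWord child w → a w < b w)
    (hsub : ∀ w, IsWord child w → ∀ e ∈ child w,
      Set.Icc (a (w ++ [e])) (b (w ++ [e])) ⊆ Set.Icc (a w) (b w))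
    (hdisj : ∀ w, IsWord child w → ∀ e ∈ child w, ∀ e' ∈ child w, e ≠ e' →
      Disjoint (Set.Icc (a (w ++ [e])) (b (w ++ [e])))
        (Set.Icc (a (w ++ [e'])) (b (w ++ [e']))))
    (hsum : ∀ w, IsWord child w →
      ∑ e ∈ child w, ((b (w ++ [e]) - a (w ++ [e])) / (b w - a w)) ^ δ ≤ 1)
    (hratio : ∀ w, IsWord child w → ∀ e ∈ child w,
      b (w ++ [e]) - a (w ++ [e]) ≤ (b w - a w) / 10)
    (hmin : ∀ w, IsWord child w → ∀ e ∈ child w,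
      (b w - a w) / K ≤ b (w ++ [e]) - a (w ++ [e])) :
    limsup (fun r : ℝ => Real.log (coveringNumber r
        (⋂ n, ⋃ w ∈ wordsF child n, Set.Icc (a w) (b w))).toReal / Real.log (1 / r))
      (nhdsWithin 0 (Set.Ioi 0)) ≤ δ := by
  set X := ⋂ n, ⋃ w ∈ wordsF child n, Set.Icc (a w) (b w) with hX
  set f : ℝ → ℝ := fun r =>
    Real.log (coveringNumber r X).toReal / Real.log (1 / r) with hf
  have hL0 : 0 < b [] - a [] := by
    have := hlen [] ⟨0, by simp [wordsF]⟩; linarith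
  set L₀ := b [] - a [] with hL₀
  have hK0 : (0:ℝ) < K := lt_of_lt_of_le one_pos hK
  set C := |δ * Real.log (K * L₀)| with hC
  have hCnn : 0 ≤ C := abs_nonneg _
  -- the key eventual bound
  have hev : ∀ ε : ℝ, 0 < ε → ∀ᶠ r in nhdsWithin 0 (Set.Ioi 0), f r ≤ δ + ε := by
    intro ε hε
    set r₀ : ℝ := min (min 1 L₀) (Real.exp (-(C / ε))) with hr₀
    have hr₀pos : 0 < r₀ := by positivity
    filter_upwards [Ioo_mem_nhdsGT_of_mem (Set.mem_Ico.2 ⟨le_refl (0:ℝ), hr₀pos⟩)]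
    intro r hr
    obtain ⟨hr0, hrlt⟩ := hr
    have hr1 : r < 1 := hrlt.trans_le ((min_le_left _ _).trans (min_le_left _ _))
    have hrL : r < L₀ := hrlt.trans_le ((min_le_left _ _).trans (min_le_right _ _))
    have hrexp : r < Real.exp (-(C / ε)) := hrlt.trans_le (min_le_right _ _)
    have hlog1r : 0 < Real.log (1 / r) := Real.log_pos (by rw [lt_div_iff₀ hr0]; linarith)
    have hlogC : C / ε < Real.log (1 / r) := by
      have := (Real.log_lt_iff_lt_exp hr0).2 hrexp
      rw [one_div, Real.log_inv]
      linarith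
    have hCle : C / Real.log (1 / r) < ε := by
      rw [div_lt_iff₀ hlog1r]
      rw [div_lt_iff₀ hε] at hlogC
      linarith [hlogC]
    -- covering bound
    obtain ⟨m, h1, h2⟩ := covering_bound hδ.1 hK hlen hsub hdisj hsum hratio hmin hr0 hrL.le
    have htoReal : (coveringNumber r X).toReal ≤ (m : ℝ) := by
      have := ENNReal.toReal_mono (by simp) h1
      simpa using this
    -- m ≤ (K * L₀ / r) ^ δ
    have hrK : (0:ℝ) < r / K := by positivity
    have hbase : 1 < K * L₀ / r := by
      rw [lt_div_iff₀ hr0]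
      have : L₀ ≤ K * L₀ := le_mul_of_one_le_left hL0.le hK
      linarith
    have hmB : (m : ℝ) ≤ (K * L₀ / r) ^ δ := by
      have hid : (K * L₀ / r) ^ δ * (r / K) ^ δ = L₀ ^ δ := by
        rw [← Real.mul_rpow (by positivity) hrK.le]
        congr 1
        field_simp
      have hp : (0:ℝ) < (r / K) ^ δ := Real.rpow_pos_of_pos hrK δ
      calc (m:ℝ) = m * (r/K) ^ δ / (r/K) ^ δ := by field_simp
        _ ≤ L₀ ^ δ / (r/K) ^ δ := by gcongr
        _ = (K * L₀ / r) ^ δ * (r / K) ^ δ / (r/K) ^ δ := by rw [hid]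
        _ = (K * L₀ / r) ^ δ := by field_simp
    have hB1 : 1 ≤ (K * L₀ / r) ^ δ := by
      calc (1:ℝ) = 1 ^ δ := (Real.one_rpow δ).symm
        _ ≤ (K * L₀ / r) ^ δ := Real.rpow_le_rpow one_pos.le hbase.le hδ.1.le
    have hlogN : Real.log (coveringNumber r X).toReal
        ≤ δ * Real.log (K * L₀) + δ * Real.log (1 / r) := by
      calc Real.log (coveringNumber r X).toReal
          ≤ Real.log ((K * L₀ / r) ^ δ) :=
            log_le_log_general ENNReal.toReal_nonneg (htoReal.trans hmB) hB1
        _ = δ * Real.log (K * L₀ / r) := Real.log_rpow (by positivity) δ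
        _ = δ * Real.log (K * L₀) + δ * Real.log (1 / r) := by
            rw [Real.log_div (by positivity) hr0.ne', one_div, Real.log_inv]
            ring
    -- conclude
    have : f r ≤ δ + δ * Real.log (K * L₀) / Real.log (1 / r) := by
      rw [hf]
      simp only
      rw [div_le_iff₀ hlog1r]
      have h3 : (δ + δ * Real.log (K * L₀) / Real.log (1 / r)) * Real.log (1/r)
          = δ * Real.log (1/r) + δ * Real.log (K * L₀) := by
        field_simp
      rw [h3]
      linarith [hlogN]
    have h4 : δ * Real.log (K * L₀) / Real.log (1 / r) ≤ C / Real.log (1 / r) := by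
      gcongr
      exact le_abs_self _
    linarith [hCle]
  -- limsup argument
  rw [Filter.limsup_eq]
  by_cases hbdd : BddBelow {a | ∀ᶠ r in nhdsWithin (0:ℝ) (Set.Ioi 0), f r ≤ a}
  · refine le_of_forall_pos_le_add fun ε hε => csInf_le hbdd ?_
    exact hev ε hε
  · rw [Real.sInf_of_not_bddBelow hbdd]
    exact hδ.1.le

/-- under the hypotheses of Statement 8 together with a lower bound
`min_e |I_{we}| ≥ |I_w|/K` on the children lengths, the limit set
`X = ⋂_n ⋃_{w ∈ Ω_n} I_w` satisfies `dim_B^+ X ≤ δ`. -/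
theorem stmt_9 (δ K : ℝ) (hδ : δ ∈ Set.Ioo (0:ℝ) 1) (hK : 1 ≤ K)
    (child : List ℕ → Finset ℕ) (a b : List ℕ → ℝ)
    (hchild : ∀ w, IsWord child w → (child w).Nonempty)
    (hlen : ∀ w, IsWord child w → a w < b w)
    (hsub : ∀ w, IsWord child w → ∀ e ∈ child w,
      Set.Icc (a (w ++ [e])) (b (w ++ [e])) ⊆ Set.Icc (a w) (b w))
    (hdisj : ∀ w, IsWord child w → ∀ e ∈ child w, ∀ e' ∈ child w, e ≠ e' →
      Disjoint (Set.Icc (a (w ++ [e])) (b (w ++ [e])))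
        (Set.Icc (a (w ++ [e'])) (b (w ++ [e']))))
    (hsum : ∀ w, IsWord child w →
      ∑ e ∈ child w, ((b (w ++ [e]) - a (w ++ [e])) / (b w - a w)) ^ δ ≤ 1)
    (hratio : ∀ w, IsWord child w → ∀ e ∈ child w,
      b (w ++ [e]) - a (w ++ [e]) ≤ (b w - a w) / 10)
    (hmin : ∀ w, IsWord child w → ∀ e ∈ child w,
      (b w - a w) / K ≤ b (w ++ [e]) - a (w ++ [e])) :
    upperBoxDim (⋂ n, ⋃ w ∈ wordsF child n, Set.Icc (a w) (b w)) ≤ δ := by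
  unfold upperBoxDim
  exact aux_main δ K hδ hK child a b hchild hlen hsub hdisj hsum hratio hmin
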